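/- arXiv:2005.01106 — 2 statements merged into one kernel-verified Lean document; each statement's English description precedes it below -/
import Mathlib

section
/- For Ψ_θ = sinθ|00⟩ + cosθ|11⟩ with θ ∈ (0, π/4), the product of the three projectors Ω₁ = |00⟩⟨00| + |11⟩⟨11|, Ω₂ = I − |+⟩⟨+| ⊗ |φ₊⟩⟨φ₊|, Ω₃ = I − |−⟩⟨−| ⊗ |φ₋⟩⟨φ₋| equals |Ψ_θ⟩⟨Ψ_θ|, where φ_± = cosθ|0⟩ ∓ sinθ|1⟩. -/
noncomputable section
open Matrix

/-- The basis vector |0⟩ of ℂ². -/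
def e0 : Fin 2 → ℂ := ![1, 0]

/-- The basis vector |1⟩ of ℂ². -/
def e1 : Fin 2 → ℂ := ![0, 1]

/-- |+⟩ = (|0⟩ + |1⟩)/√2. -/
def plus : Fin 2 → ℂ := ((Real.sqrt 2 : ℂ))⁻¹ • (e0 + e1)

/-- |−⟩ = (|0⟩ − |1⟩)/√2. -/
def minus : Fin 2 → ℂ := ((Real.sqrt 2 : ℂ))⁻¹ • (e0 - e1)

/-- The tensor product of two vectors. -/
def tp {α β : Type*} (v : α → ℂ) (w : β → ℂ) : α × β → ℂ := fun p => v p.1 * w p.2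

/-- φ₊ = cosθ|0⟩ − sinθ|1⟩. -/
def phiP (θ : ℝ) : Fin 2 → ℂ := (Real.cos θ : ℂ) • e0 - (Real.sin θ : ℂ) • e1

/-- φ₋ = cosθ|0⟩ + sinθ|1⟩. -/
def phiM (θ : ℝ) : Fin 2 → ℂ := (Real.cos θ : ℂ) • e0 + (Real.sin θ : ℂ) • e1

/-- Ψ_θ = sinθ|00⟩ + cosθ|11⟩. -/
def Psi (θ : ℝ) : Fin 2 × Fin 2 → ℂ :=
  (Real.sin θ : ℂ) • tp e0 e0 + (Real.cos θ : ℂ) • tp e1 e1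

/-- Ω₁ = |00⟩⟨00| + |11⟩⟨11|. -/
def Om1 : Matrix (Fin 2 × Fin 2) (Fin 2 × Fin 2) ℂ :=
  vecMulVec (tp e0 e0) (star (tp e0 e0)) + vecMulVec (tp e1 e1) (star (tp e1 e1))

/-- Ω₂ = I − |+⟩⟨+| ⊗ |φ₊⟩⟨φ₊|. -/
def Om2 (θ : ℝ) : Matrix (Fin 2 × Fin 2) (Fin 2 × Fin 2) ℂ :=
  1 - vecMulVec (tp plus (phiP θ)) (star (tp plus (phiP θ)))

/-- Ω₃ = I − |−⟩⟨−| ⊗ |φ₋⟩⟨φ₋|. -/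
def Om3 (θ : ℝ) : Matrix (Fin 2 × Fin 2) (Fin 2 × Fin 2) ℂ :=
  1 - vecMulVec (tp minus (phiM θ)) (star (tp minus (phiM θ)))

set_option maxHeartbeats 2000000 in
/-- For Ψ_θ = sinθ|00⟩ + cosθ|11⟩ with θ ∈ (0, π/4), the product of the three
projectors Ω₁, Ω₂, Ω₃ equals |Ψ_θ⟩⟨Ψ_θ|. -/
theorem stmt_14 (θ : ℝ) (hθ0 : 0 < θ) (hθ1 : θ < Real.pi / 4) :
    Om1 * Om2 θ * Om3 θ = vecMulVec (Psi θ) (star (Psi θ)) := by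
  have h2 : ((Real.sqrt 2 : ℝ) : ℂ)⁻¹ * ((Real.sqrt 2 : ℝ) : ℂ)⁻¹ = 2⁻¹ := by
    rw [← mul_inv, ← Complex.ofReal_mul, Real.mul_self_sqrt (by norm_num)]
    norm_num
  have h2sq : (((Real.sqrt 2 : ℝ) : ℂ)⁻¹)^2 = 2⁻¹ := by rw [sq]; exact h2
  have h4 : (((Real.sqrt 2 : ℝ) : ℂ)⁻¹)^4 = 4⁻¹ := by
    have : (4:ℕ) = 2*2 := rfl
    rw [show ((4:ℕ):ℕ)=4 from rfl] at this
    rw [show (((Real.sqrt 2 : ℝ) : ℂ)⁻¹)^4 = ((((Real.sqrt 2 : ℝ) : ℂ)⁻¹)^2)^2 by ring, h2sq]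
    norm_num
  have hsc : ((Real.sin θ : ℂ))^2 + ((Real.cos θ : ℂ))^2 = 1 := by
    norm_cast; exact Real.sin_sq_add_cos_sq θ
  ext ⟨i, j⟩ ⟨k, l⟩
  fin_cases i <;> fin_cases j <;> fin_cases k <;> fin_cases l <;>
    simp only [Om1, Om2, Om3, Psi, tp, plus, minus, phiP, phiM, e0, e1,
      Matrix.mul_apply, Fintype.sum_prod_type, Fin.sum_univ_two,
      Matrix.vecMulVec_apply, Matrix.add_apply, Matrix.sub_apply, Matrix.one_apply,
      Pi.add_apply, Pi.sub_apply, Pi.smul_apply, Pi.star_apply, smul_eq_mul,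
      star_mul', Complex.star_def, _root_.map_mul, map_sub, map_add, map_inv₀,
      Complex.conj_ofReal, Matrix.cons_val_zero, Matrix.cons_val_one, Matrix.head_cons,
      Prod.mk.injEq] <;>
    simp [-Complex.ofReal_sin, -Complex.ofReal_cos] <;> ring_nf <;>
    simp only [h2sq, h4] <;> ring_nf <;>
    first
      | rfl
      | linear_combination (-1 : ℂ) * hsc
      | linear_combination ((Real.sin θ : ℂ)^2 + (Real.cos θ : ℂ)^2 - 2) * hsc
      | linear_combination hsc
end
end

section
/- For Ψ_θ = sinθ|00⟩ + cosθ|11⟩ with θ ∈ (0, π/4), the operator Ω_2qb = (1/3)(Ω₁ + Ω₂ + Ω₃) (with Ω₁, Ω₂, Ω₃ as above) fixes Ψ_θ and has second largest eigenvalue 2/3, so its spectral gap is 1/3 independently of θ. -/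
noncomputable section
open Matrix

/-- The protocol Ω_2qb = (1/3)(Ω₁ + Ω₂ + Ω₃). -/
def Om2qb (θ : ℝ) : Matrix (Fin 2 × Fin 2) (Fin 2 × Fin 2) ℂ :=
  ((1 : ℂ) / 3) • (Om1 + Om2 θ + Om3 θ)


/-- The other eigenvector with eigenvalue 1/3: sinθ|01⟩ − cosθ|10⟩. -/
def v4aux (θ : ℝ) : Fin 2 × Fin 2 → ℂ :=
  (Real.sin θ : ℂ) • tp e0 e1 - (Real.cos θ : ℂ) • tp e1 e0

set_option maxHeartbeats 2000000 in
lemma key_decomp (θ : ℝ) : Om2qb θ = ((2:ℂ)/3) • (1 : Matrix (Fin 2 × Fin 2) (Fin 2 × Fin 2) ℂ)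
    + ((1:ℂ)/3) • (vecMulVec (Psi θ) (star (Psi θ)) - vecMulVec (v4aux θ) (star (v4aux θ))) := by
  have hc2 : (Real.cos θ : ℂ)^2 = 1 - (Real.sin θ : ℂ)^2 := by
    norm_cast; nlinarith [Real.sin_sq_add_cos_sq θ]
  have hrw : ((Real.sqrt 2 : ℂ))⁻¹ ^ 2 = 1/2 := by
    rw [inv_pow]; norm_cast; rw [Real.sq_sqrt (by norm_num : (0:ℝ) ≤ 2)]; norm_num
  ext ⟨i, j⟩ ⟨k, l⟩
  fin_cases i <;> fin_cases j <;> fin_cases k <;> fin_cases l <;>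
  · simp [Om2qb, Om1, Om2, Om3, Psi, v4aux, Matrix.add_apply, Matrix.sub_apply,
      Matrix.smul_apply, Matrix.one_apply, vecMulVec_apply, Pi.star_apply, Pi.add_apply,
      Pi.sub_apply, Pi.smul_apply, tp, e0, e1, plus, minus, phiP, phiM, smul_eq_mul,
      Complex.star_def, Complex.conj_ofReal, map_inv₀, -Complex.ofReal_cos, -Complex.ofReal_sin]
    try ring_nf
    try simp only [hrw, hc2]
    try ring_nf
    try (norm_num [Prod.ext_iff, Fin.ext_iff])

lemma vmv_mulVec (v w x : Fin 2 × Fin 2 → ℂ) : vecMulVec v w *ᵥ x = (w ⬝ᵥ x) • v := by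
  ext i
  simp [vecMulVec, mulVec, dotProduct, Finset.mul_sum, Finset.sum_mul, mul_comm, mul_left_comm]

lemma dp_PP (θ : ℝ) : star (Psi θ) ⬝ᵥ Psi θ = 1 := by
  have hc2 : (Real.cos θ : ℂ)^2 = 1 - (Real.sin θ : ℂ)^2 := by
    norm_cast; nlinarith [Real.sin_sq_add_cos_sq θ]
  simp [dotProduct, Fintype.sum_prod_type, Fin.sum_univ_two, Psi, tp, e0, e1,
    Complex.star_def, Complex.conj_ofReal, -Complex.ofReal_cos, -Complex.ofReal_sin]
  linear_combination hc2

lemma dp_44 (θ : ℝ) : star (v4aux θ) ⬝ᵥ v4aux θ = 1 := by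
  have hc2 : (Real.cos θ : ℂ)^2 = 1 - (Real.sin θ : ℂ)^2 := by
    norm_cast; nlinarith [Real.sin_sq_add_cos_sq θ]
  simp [dotProduct, Fintype.sum_prod_type, Fin.sum_univ_two, v4aux, tp, e0, e1,
    Complex.star_def, Complex.conj_ofReal, -Complex.ofReal_cos, -Complex.ofReal_sin]
  linear_combination hc2

lemma dp_4P (θ : ℝ) : star (v4aux θ) ⬝ᵥ Psi θ = 0 := by
  simp [dotProduct, Fintype.sum_prod_type, Fin.sum_univ_two, v4aux, Psi, tp, e0, e1,
    Complex.star_def, Complex.conj_ofReal, -Complex.ofReal_cos, -Complex.ofReal_sin]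

lemma dp_conj (w φ : Fin 2 × Fin 2 → ℂ) :
    star φ ⬝ᵥ w = starRingEnd ℂ (star w ⬝ᵥ φ) := by
  simp [dotProduct, map_sum, mul_comm]

theorem mulVec_key (θ : ℝ) (x : Fin 2 × Fin 2 → ℂ) :
    Om2qb θ *ᵥ x = ((2:ℂ)/3) • x
      + ((1:ℂ)/3) • ((star (Psi θ) ⬝ᵥ x) • Psi θ - (star (v4aux θ) ⬝ᵥ x) • v4aux θ) := by
  rw [key_decomp θ]
  simp [Matrix.add_mulVec, Matrix.smul_mulVec, Matrix.sub_mulVec, vmv_mulVec]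

/-- For θ ∈ (0, π/4), Ω_2qb = (1/3)(Ω₁ + Ω₂ + Ω₃) fixes Ψ_θ and its second
largest eigenvalue — the maximum of ⟨φ|Ω_2qb|φ⟩ over unit vectors orthogonal
to Ψ_θ — is 2/3, so its spectral gap is 1/3 independently of θ. -/
theorem stmt_15 (θ : ℝ) (hθ0 : 0 < θ) (hθ1 : θ < Real.pi / 4) :
    Om2qb θ *ᵥ Psi θ = Psi θ ∧
      (∀ φ : Fin 2 × Fin 2 → ℂ, star φ ⬝ᵥ φ = 1 → star (Psi θ) ⬝ᵥ φ = 0 →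
        (star φ ⬝ᵥ (Om2qb θ *ᵥ φ)).re ≤ 2 / 3) ∧
      (∃ φ : Fin 2 × Fin 2 → ℂ, star φ ⬝ᵥ φ = 1 ∧ star (Psi θ) ⬝ᵥ φ = 0 ∧
        Om2qb θ *ᵥ φ = ((2 : ℂ) / 3) • φ) := by
  have hc2 : (Real.cos θ : ℂ)^2 = 1 - (Real.sin θ : ℂ)^2 := by
    norm_cast; nlinarith [Real.sin_sq_add_cos_sq θ]
  refine ⟨?_, ?_, ?_⟩
  · rw [mulVec_key, dp_PP, dp_4P]
    ext p
    simp
    ring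
  · intro φ hφ horth
    rw [mulVec_key, horth]
    set z : ℂ := star (v4aux θ) ⬝ᵥ φ with hz
    have hconj : star φ ⬝ᵥ v4aux θ = starRingEnd ℂ z := dp_conj _ _
    have hexp : star φ ⬝ᵥ (((2:ℂ)/3) • φ
        + ((1:ℂ)/3) • ((0:ℂ) • Psi θ - z • v4aux θ)) = (2:ℂ)/3 - (Complex.normSq z)/3 := by
      rw [dotProduct_add, dotProduct_smul, dotProduct_smul, dotProduct_sub,
        dotProduct_smul, dotProduct_smul, hφ, hconj]
      simp only [smul_eq_mul]
      rw [show z * starRingEnd ℂ z = (Complex.normSq z : ℂ) from Complex.mul_conj z]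
      push_cast
      ring
    rw [hexp]
    have : (0:ℝ) ≤ Complex.normSq z := Complex.normSq_nonneg z
    simp [Complex.sub_re, Complex.div_re]
    norm_num
    positivity
  · refine ⟨(Real.cos θ : ℂ) • tp e0 e0 - (Real.sin θ : ℂ) • tp e1 e1, ?_, ?_, ?_⟩
    · simp [dotProduct, Fintype.sum_prod_type, Fin.sum_univ_two, tp, e0, e1,
        Complex.star_def, Complex.conj_ofReal, -Complex.ofReal_cos, -Complex.ofReal_sin]
      linear_combination hc2
    · simp [dotProduct, Fintype.sum_prod_type, Fin.sum_univ_two, Psi, tp, e0, e1,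
        Complex.star_def, Complex.conj_ofReal, -Complex.ofReal_cos, -Complex.ofReal_sin]
      ring
    · rw [mulVec_key]
      have h1 : star (Psi θ) ⬝ᵥ ((Real.cos θ : ℂ) • tp e0 e0 - (Real.sin θ : ℂ) • tp e1 e1)
          = 0 := by
        simp [dotProduct, Fintype.sum_prod_type, Fin.sum_univ_two, Psi, tp, e0, e1,
          Complex.star_def, Complex.conj_ofReal, -Complex.ofReal_cos, -Complex.ofReal_sin]
        ring
      have h2 : star (v4aux θ) ⬝ᵥ ((Real.cos θ : ℂ) • tp e0 e0 - (Real.sin θ : ℂ) • tp e1 e1)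
          = 0 := by
        simp [dotProduct, Fintype.sum_prod_type, Fin.sum_univ_two, v4aux, tp, e0, e1,
          Complex.star_def, Complex.conj_ofReal, -Complex.ofReal_cos, -Complex.ofReal_sin]
      rw [h1, h2]
      ext p
      simp
end
end
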